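/- Let $k,n$ be positive integers, and let $m,l$ be natural numbers with $m+k(1-l)=1-n$ (so $kl-m=k+n-1$). For $p\ge\frac{2k+2n}{k+n-1}$, the function $(z,w)\mapsto z_1^m/w^l$ does not belong to $L^p(\Omega^{n+1}_k)$; equivalently, $\int_{\Omega^{n+1}_k}\frac{|z_1|^{mp}}{|w|^{lp}}\,dV=\infty$ for such $p$. -/

import Mathlib

open MeasureTheory

noncomputable instance (n : ℕ) : MeasurableSpace (EuclideanSpace ℂ (Fin n)) :=
  MeasurableSpace.comap WithLp.ofLp MeasurableSpace.pi

instance (n : ℕ) : BorelSpace (EuclideanSpace ℂ (Fin n)) :=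
  PiLp.borelSpace (X := fun _ : Fin n => ℂ) 2

noncomputable instance (n : ℕ) : MeasureSpace (EuclideanSpace ℂ (Fin n)) :=
  ⟨Measure.map (WithLp.toLp 2) (Measure.pi fun _ : Fin n => (volume : Measure ℂ))⟩

/-- The generalized Hartogs triangle
`Ω^{n+1}_k = {(z,w) ∈ ℂⁿ × ℂ : |z|^k < |w| < 1}`. -/
def Omega (k n : ℕ) : Set (EuclideanSpace ℂ (Fin n) × ℂ) :=
  {x | ‖x.1‖ ^ k < ‖x.2‖ ∧ ‖x.2‖ < 1}

/-!
The dilation `D (z, w) = (z / 2, w / 2 ^ k)` maps `Ω = Omega k n` into its part `{|w| < 2⁻ᵏ}`.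
It multiplies Lebesgue measure by `2 ^ (-2n - 2k)` and the integrand `|z₁|^a / |w|^b`, with
`a = m p`, `b = l p`, by `2 ^ (k b - a)`; the bound on `p` says exactly that `k b - a ≥ 2n + 2k`,
so the integral `I` over `Ω` is at most the integral over `D Ω`. The shell `Ω ∩ {|w| ≥ 2⁻ᵏ}` is
disjoint from `D Ω` and contributes some `δ > 0`, whence `I + δ ≤ I` and `I = ∞`.
-/

open Set Module
open scoped ENNReal

instance (n : ℕ) : (volume : Measure (EuclideanSpace ℂ (Fin n))).IsAddHaarMeasure :=
  (PiLp.continuousLinearEquiv 2 ℝ (fun _ : Fin n => ℂ)).symm.isAddHaarMeasure_map _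

instance (n : ℕ) : (volume : Measure (EuclideanSpace ℂ (Fin n) × ℂ)).IsAddHaarMeasure :=
  Measure.prod.instIsAddHaarMeasure _ _

theorem finrank_real_euclideanSpace_complex (ι : Type*) [Fintype ι] :
    finrank ℝ (EuclideanSpace ℂ ι) = 2 * Fintype.card ι := by
  rw [← finrank_mul_finrank ℝ ℂ, Complex.finrank_real_complex, finrank_euclideanSpace]

theorem setLIntegral_eq_top_of_disjoint_of_le {α : Type*} [MeasurableSpace α] {μ : Measure α}
    {f : α → ℝ≥0∞} {Ω A S : Set α} (hA : A ⊆ Ω) (hS : S ⊆ Ω) (hSm : MeasurableSet S)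
    (hAS : Disjoint A S) (hle : ∫⁻ x in Ω, f x ∂μ ≤ ∫⁻ x in A, f x ∂μ)
    (hpos : ∫⁻ x in S, f x ∂μ ≠ 0) : ∫⁻ x in Ω, f x ∂μ = ⊤ := by
  by_contra hfin
  refine (ENNReal.lt_add_right hfin hpos).not_ge ?_
  calc ∫⁻ x in Ω, f x ∂μ + ∫⁻ x in S, f x ∂μ
      ≤ ∫⁻ x in A, f x ∂μ + ∫⁻ x in S, f x ∂μ := by gcongr
    _ = ∫⁻ x in A ∪ S, f x ∂μ := (lintegral_union hSm hAS).symm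
    _ ≤ ∫⁻ x in Ω, f x ∂μ := lintegral_mono_set (union_subset hA hS)

section Dilation

variable {E F : Type*} [NormedAddCommGroup E] [NormedSpace ℝ E] [NormedAddCommGroup F]
  [NormedSpace ℝ F]

def prodDilation (r s : ℝ) : E × F →L[ℝ] E × F :=
  (r • ContinuousLinearMap.id ℝ E).prodMap (s • ContinuousLinearMap.id ℝ F)

@[simp]
theorem prodDilation_apply (r s : ℝ) (x : E × F) : prodDilation r s x = (r • x.1, s • x.2) :=
  rfl

theorem det_prodDilation [FiniteDimensional ℝ E] [FiniteDimensional ℝ F] (r s : ℝ) :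
    (prodDilation r s : E × F →L[ℝ] E × F).det = r ^ finrank ℝ E * s ^ finrank ℝ F := by
  simp [prodDilation, ContinuousLinearMap.det, LinearMap.det_prodMap, LinearMap.det_smul]

theorem prodDilation_injective {r s : ℝ} (hr : r ≠ 0) (hs : s ≠ 0) :
    Function.Injective (prodDilation r s : E × F → E × F) :=
  (smul_right_injective E hr).prodMap (smul_right_injective F hs)

theorem setLIntegral_image_prodDilation [FiniteDimensional ℝ E] [FiniteDimensional ℝ F]
    [MeasurableSpace E] [BorelSpace E] [MeasurableSpace F] [BorelSpace F]
    (μ : Measure (E × F)) [μ.IsAddHaarMeasure] {r s : ℝ} (hr : r ≠ 0) (hs : s ≠ 0)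
    {A : Set (E × F)} (hA : MeasurableSet A) (g : E × F → ℝ≥0∞) :
    ∫⁻ x in prodDilation r s '' A, g x ∂μ =
      ENNReal.ofReal |r ^ finrank ℝ E * s ^ finrank ℝ F| *
        ∫⁻ x in A, g (prodDilation r s x) ∂μ := by
  rw [lintegral_image_eq_lintegral_abs_det_fderiv_mul μ hA (f' := fun _ => prodDilation r s)
      (fun _ _ => (prodDilation (E := E) (F := F) r s).hasFDerivAt.hasFDerivWithinAt)
      (prodDilation_injective hr hs).injOn,
    det_prodDilation, lintegral_const_mul' _ _ ENNReal.ofReal_ne_top]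

end Dilation

theorem isOpen_Omega (k n : ℕ) : IsOpen (Omega k n) := by
  rw [Omega, ofPred_and]
  exact (isOpen_lt (by fun_prop) (by fun_prop)).inter (isOpen_lt (by fun_prop) continuous_const)

theorem prodDilation_image_Omega_subset {k n : ℕ} {r s : ℝ} (hr : 0 ≤ r) (hs : 0 < s)
    (hrs : r ^ k ≤ s) (hs1 : s ≤ 1) :
    prodDilation r s '' Omega k n ⊆ Omega k n ∩ {x | ‖x.2‖ < s} := by
  rintro _ ⟨⟨z, w⟩, ⟨hzw, hw⟩, rfl⟩
  dsimp only at hzw hw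
  have hsw : ‖s • w‖ = s * ‖w‖ := by rw [norm_smul, Real.norm_of_nonneg hs.le]
  refine ⟨⟨?_, ?_⟩, ?_⟩ <;> simp only [prodDilation_apply, mem_ofPred_eq, hsw]
  · calc ‖r • z‖ ^ k = r ^ k * ‖z‖ ^ k := by rw [norm_smul, Real.norm_of_nonneg hr, mul_pow]
      _ ≤ s * ‖z‖ ^ k := by gcongr
      _ < s * ‖w‖ := by gcongr
  · nlinarith
  · nlinarith

noncomputable def monomialWeight {n : ℕ} (i : Fin n) (a b : ℝ)
    (x : EuclideanSpace ℂ (Fin n) × ℂ) : ℝ≥0∞ :=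
  ENNReal.ofReal (‖x.1 i‖ ^ a / ‖x.2‖ ^ b)

theorem measurable_monomialWeight {n : ℕ} (i : Fin n) (a b : ℝ) :
    Measurable (monomialWeight i a b) := by
  unfold monomialWeight
  fun_prop

theorem monomialWeight_prodDilation {n : ℕ} (i : Fin n) (a b : ℝ) {r s : ℝ} (hr : 0 ≤ r)
    (hs : 0 ≤ s) (x : EuclideanSpace ℂ (Fin n) × ℂ) :
    monomialWeight i a b (prodDilation r s x) =
      ENNReal.ofReal (r ^ a / s ^ b) * monomialWeight i a b x := by
  simp only [monomialWeight, prodDilation_apply, PiLp.smul_apply, norm_smul,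
    Real.norm_of_nonneg hr, Real.norm_of_nonneg hs]
  rw [Real.mul_rpow hr (norm_nonneg _), Real.mul_rpow hs (norm_nonneg _), mul_div_mul_comm,
    ENNReal.ofReal_mul (by positivity)]

theorem setLIntegral_monomialWeight_Omega_le_image {k n : ℕ} (i : Fin n) {a b t : ℝ}
    (ht0 : 0 < t) (ht1 : t ≤ 1) (hab : 2 * n + 2 * k + a ≤ k * b) :
    ∫⁻ x in Omega k n, monomialWeight i a b x ≤
      ∫⁻ x in prodDilation t (t ^ k) '' Omega k n, monomialWeight i a b x := by
  have htk : 0 < t ^ k := pow_pos ht0 k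
  have hfactor : t ^ (2 * n) * (t ^ k) ^ 2 * (t ^ a / (t ^ k) ^ b) =
      t ^ ((2 * n + 2 * k : ℝ) + a - k * b) := by
    rw [← Real.rpow_natCast_mul ht0.le, ← pow_mul, ← pow_add, ← Real.rpow_natCast,
      Real.rpow_sub ht0, Real.rpow_add ht0, mul_div_assoc]
    push_cast
    ring_nf
  rw [setLIntegral_image_prodDilation volume ht0.ne' htk.ne' (isOpen_Omega k n).measurableSet]
  simp_rw [monomialWeight_prodDilation i a b ht0.le htk.le]
  rw [lintegral_const_mul' _ _ ENNReal.ofReal_ne_top, ← mul_assoc,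
    ← ENNReal.ofReal_mul (abs_nonneg _), finrank_real_euclideanSpace_complex, Fintype.card_fin,
    Complex.finrank_real_complex, abs_of_pos (by positivity), hfactor]
  refine le_mul_of_one_le_left zero_le (ENNReal.one_le_ofReal.mpr ?_)
  exact Real.one_le_rpow_of_pos_of_le_one_of_nonpos ht0 ht1 (by linarith)

theorem setLIntegral_monomialWeight_Omega_pos {k n : ℕ} (hk : k ≠ 0) (i : Fin n) (a b : ℝ)
    {s : ℝ} (hs : 0 ≤ s) (hs1 : s < 1) :
    0 < ∫⁻ x in Omega k n ∩ {x | s ≤ ‖x.2‖}, monomialWeight i a b x := by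
  rw [setLIntegral_pos_iff (measurable_monomialWeight i a b)]
  set U := Omega k n ∩ {x | s < ‖x.2‖} ∩ {x | x.1 i ≠ 0}
  have hU : IsOpen U := ((isOpen_Omega k n).inter (isOpen_lt (by fun_prop) (by fun_prop))).inter
    (isOpen_ne_fun (by fun_prop) (by fun_prop))
  obtain ⟨c, hsc, hc1⟩ := exists_between hs1
  have hc : 0 < c := hs.trans_lt hsc
  have hmem : (EuclideanSpace.single i ((c / 2 : ℝ) : ℂ), (c : ℂ)) ∈ U := by
    refine ⟨⟨⟨?_, ?_⟩, ?_⟩, ?_⟩ <;>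
      simp only [mem_ofPred_eq, PiLp.single_apply, PiLp.norm_single, if_true,
        Complex.norm_of_nonneg hc.le, Complex.norm_of_nonneg (half_pos hc).le]
    · exact (pow_le_of_le_one (half_pos hc).le (by linarith) hk).trans_lt (half_lt_self hc)
    · exact hc1
    · exact hsc
    · exact_mod_cast (half_pos hc).ne'
  refine (hU.measure_pos volume ⟨_, hmem⟩).trans_le (measure_mono ?_)
  rintro x ⟨⟨hx, hxs⟩, hxi⟩
  refine ⟨(ENNReal.ofReal_pos.mpr ?_).ne', hx, hxs.out.le⟩
  exact div_pos (Real.rpow_pos_of_pos (norm_pos_iff.mpr hxi) _)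
    (Real.rpow_pos_of_pos (hs.trans_lt hxs) _)

/-- For `m + k(1-l) = 1-n` and `p ≥ (2k+2n)/(k+n-1)`, the function
`z₁^m / w^l` is not in `L^p(Ω^{n+1}_k)`:
`∫_{Ω^{n+1}_k} |z₁|^{mp} / |w|^{lp} dV = ∞`. -/
theorem monomial_not_in_Lp (k n : ℕ) (hk : 0 < k) (hn : 0 < n) (m l : ℕ)
    (hml : (m : ℤ) + k * (1 - l) = 1 - n) (p : ℝ)
    (hp : (2 * k + 2 * n : ℝ) / (k + n - 1) ≤ p) :
    (∫⁻ x in Omega k n,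
        ENNReal.ofReal (‖x.1 ⟨0, hn⟩‖ ^ ((m : ℝ) * p) / ‖x.2‖ ^ ((l : ℝ) * p))) = ⊤ := by
  change ∫⁻ x in Omega k n, monomialWeight ⟨0, hn⟩ (m * p) (l * p) x = ⊤
  have hkn : (0 : ℝ) < k + n - 1 := by
    have : (1 : ℝ) ≤ k := by exact_mod_cast hk
    have : (1 : ℝ) ≤ n := by exact_mod_cast hn
    linarith
  have hml' : (m : ℝ) + k * (1 - l) = 1 - n := by exact_mod_cast hml
  have hexp : 2 * n + 2 * k + m * p ≤ k * (l * p) := by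
    linear_combination (div_le_iff₀ hkn).mp hp + p * hml'
  set s : ℝ := (1 / 2) ^ k
  have hs1 : s < 1 := pow_lt_one₀ (by norm_num) (by norm_num) hk.ne'
  have himage : prodDilation (1 / 2) s '' Omega k n ⊆ Omega k n ∩ {x | ‖x.2‖ < s} :=
    prodDilation_image_Omega_subset (by norm_num) (by positivity) le_rfl hs1.le
  have hshell : MeasurableSet (Omega k n ∩ {x | s ≤ ‖x.2‖}) :=
    (isOpen_Omega k n).measurableSet.inter (measurableSet_le measurable_const (by fun_prop))
  have hdisj : Disjoint (prodDilation (1 / 2) s '' Omega k n) (Omega k n ∩ {x | s ≤ ‖x.2‖}) :=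
    disjoint_left.mpr fun x hxA hxS => (himage hxA).2.out.not_ge hxS.2.out
  exact setLIntegral_eq_top_of_disjoint_of_le (himage.trans inter_subset_left) inter_subset_left
    hshell hdisj (setLIntegral_monomialWeight_Omega_le_image _ (by norm_num) (by norm_num) hexp)
    (setLIntegral_monomialWeight_Omega_pos hk.ne' _ _ _ (by positivity) hs1).ne'
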